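/- arXiv:1307.5930 — 7 statements merged into one kernel-verified Lean document; each statement's English description precedes it below -/
import Mathlib

section
/- Assume hypotheses (H): U is a 3×3 real positive-definite symmetric matrix, ê ∈ ℝ³ is a unit vector, Û = (−I + 2 ê⊗ê) U (−I + 2 ê⊗ê), and there exist R̂ ∈ SO(3) and nonzero vectors a, n ∈ ℝ³ with R̂ Û = U + a ⊗ n. Assume further that the cofactor conditions (CC1), (CC2), (CC3) hold for (U, a, n). For f ∈ [0,1] set C(f) = (U + f n⊗a)(U + f a⊗n), a positive-definite symmetric matrix. Then for every f ∈ [0,1] with f ≠ 1/2: 1 is an eigenvalue of C(f), the smallest eigenvalue of C(f) is strictly less than 1, and the largest eigenvalue of C(f) is strictly greater than 1. In particular (taking f = 0), the eigenvalues λ₁ ≤ λ₂ ≤ λ₃ of U satisfy λ₁ < 1 < λ₃, so that λ₂ = 1 is a simple eigenvalue of U. -/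
open Matrix Polynomial

/-- The 180° rotation matrix `-I + 2 ê⊗ê` for a unit vector `ê`. -/
noncomputable def reflMat (e : Fin 3 → ℝ) : Matrix (Fin 3) (Fin 3) ℝ :=
  -1 + (2 : ℝ) • Matrix.vecMulVec e e

/-- Membership in SO(3): orthogonal with determinant 1. -/
def SO3 (R : Matrix (Fin 3) (Fin 3) ℝ) : Prop := R * Rᵀ = 1 ∧ R.det = 1

/-- The cofactor matrix: `(cof M)ᵢⱼ = (−1)^{i+j} det(M with row i and column j deleted)`. -/
noncomputable def cof (M : Matrix (Fin 3) (Fin 3) ℝ) : Matrix (Fin 3) (Fin 3) ℝ :=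
  Matrix.of fun i j => (-1 : ℝ) ^ ((i : ℕ) + (j : ℕ)) *
    (M.submatrix i.succAbove j.succAbove).det

/-- `μ` is the middle eigenvalue of `U`: its eigenvalues, with multiplicity,
are `l1 ≤ μ ≤ l3`. -/
def IsMiddleEigenvalue (U : Matrix (Fin 3) (Fin 3) ℝ) (μ : ℝ) : Prop :=
  ∃ l1 l3 : ℝ, l1 ≤ μ ∧ μ ≤ l3 ∧
    U.charpoly = (X - C l1) * (X - C μ) * (X - C l3)

/-- (CC1): the middle eigenvalue of `U` is 1. -/
def CC1 (U : Matrix (Fin 3) (Fin 3) ℝ) : Prop := IsMiddleEigenvalue U 1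

/-- (CC2): `a · U cof(U² − I) n = 0`. -/
noncomputable def CC2 (U : Matrix (Fin 3) (Fin 3) ℝ) (a n : Fin 3 → ℝ) : Prop :=
  a ⬝ᵥ (U * cof (U * U - 1)).mulVec n = 0

/-- (CC3): `tr U² − det U² − |a|²|n|²/4 − 2 ≥ 0`. -/
def CC3 (U : Matrix (Fin 3) (Fin 3) ℝ) (a n : Fin 3 → ℝ) : Prop :=
  (U * U).trace - (U * U).det - (a ⬝ᵥ a) * (n ⬝ᵥ n) / 4 - 2 ≥ 0

/-!
Write `Q = -1 + 2 ê ⊗ ê`, so `Q² = 1` and `Û = Q U Q`. The map `f ↦ det (C(f) - 1)` is a quadratic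
polynomial in `f`. Its value at `f = 0` is `det (U² - 1)`, which vanishes by (CC1); transposing
the twinning equation gives `C(1) = Û² = Q U² Q`, so its value at `f = 1` vanishes too; and its
remaining coefficient is the expression in (CC2). Hence `1` is an eigenvalue of every `C(f)`.
Moreover `det (U + f a ⊗ n)` is affine in `f` and equals `det U` at `f = 0, 1`, so
`det C(f) = det U²`, while `tr C(1) = tr U²` fixes the linear coefficient of `tr C(f)`. Then
`tr C(f) - det C(f) - 2 = (tr U² - det U² - 2 - |a|²|n|²/4) + |a|²|n|² (f - 1/2)² > 0` by (CC3),
and a `3 × 3` matrix with eigenvalue `1` and `tr - det > 2` has its other two eigenvalues real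
and on either side of `1`, since their product is `det` and their sum is `tr - 1`.
At `f = 0` the same inequality reads `-(1 - λ₁²)(1 - λ₃²) > 0`, which rules out `λ₁ = 1` and `λ₃ = 1`.
-/

namespace Matrix

variable {R : Type*} [CommRing R]

section FinThree

def secondInvariant (M : Matrix (Fin 3) (Fin 3) R) : R :=
  M 0 0 * M 1 1 - M 0 1 * M 1 0 + (M 0 0 * M 2 2 - M 0 2 * M 2 0) +
    (M 1 1 * M 2 2 - M 1 2 * M 2 1)

theorem charpoly_fin_three (M : Matrix (Fin 3) (Fin 3) R) :
    M.charpoly = X ^ 3 - C M.trace * X ^ 2 + C M.secondInvariant * X - C M.det := by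
  simp only [charpoly, det_fin_three, charmatrix_apply, trace_fin_three, secondInvariant,
    C_add, C_sub, C_mul, diagonal_apply_eq, ne_eq, Fin.reduceEq, not_false_eq_true,
    diagonal_apply_ne, zero_sub, mul_neg, neg_mul, neg_neg]
  ring

theorem charpoly_fin_three_eq_iff (M : Matrix (Fin 3) (Fin 3) R) (p q r : R) :
    M.charpoly = (X - C p) * (X - C q) * (X - C r) ↔
      M.trace = p + q + r ∧ M.secondInvariant = p * q + p * r + q * r ∧ M.det = p * q * r := by
  have hprod : (X - C p) * (X - C q) * (X - C r) =
      X ^ 3 - C (p + q + r) * X ^ 2 + C (p * q + p * r + q * r) * X - C (p * q * r) := by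
    simp only [C_add, C_mul]
    ring
  rw [charpoly_fin_three, hprod]
  constructor
  · intro h
    have h0 := congrArg (coeff · 0) h
    have h1 := congrArg (coeff · 1) h
    have h2 := congrArg (coeff · 2) h
    simp only [coeff_sub, coeff_add, coeff_C_mul, coeff_X_pow, coeff_X, coeff_C] at h0 h1 h2
    norm_num at h0 h1 h2
    exact ⟨by linear_combination -h2, h1, h0⟩
  · rintro ⟨ht, hs, hd⟩
    rw [ht, hs, hd]

theorem det_sub_one_fin_three (M : Matrix (Fin 3) (Fin 3) R) :
    (M - 1).det = M.trace - M.secondInvariant + M.det - 1 := by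
  simp only [det_fin_three, sub_apply, one_apply_eq, ne_eq, Fin.reduceEq, not_false_eq_true,
    one_apply_ne, sub_zero, trace_fin_three, secondInvariant]
  ring

theorem trace_mul_self_fin_three (M : Matrix (Fin 3) (Fin 3) R) :
    (M * M).trace = M.trace ^ 2 - 2 * M.secondInvariant := by
  simp only [trace_fin_three, mul_apply, Fin.sum_univ_three, secondInvariant]
  ring

theorem det_sub_one_eq_zero_of_charpoly_eq {M : Matrix (Fin 3) (Fin 3) R} {p q : R}
    (h : M.charpoly = (X - C p) * (X - C 1) * (X - C q)) : (M - 1).det = 0 := by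
  obtain ⟨ht, hs, hd⟩ := (charpoly_fin_three_eq_iff M p 1 q).mp h
  rw [det_sub_one_fin_three, ht, hs, hd]
  ring

theorem trace_mul_self_sub_det_mul_self_of_charpoly_eq {M : Matrix (Fin 3) (Fin 3) R} {p q : R}
    (h : M.charpoly = (X - C p) * (X - C 1) * (X - C q)) :
    (M * M).trace - (M * M).det - 2 = -((1 - p ^ 2) * (1 - q ^ 2)) := by
  obtain ⟨ht, hs, hd⟩ := (charpoly_fin_three_eq_iff M p 1 q).mp h
  rw [trace_mul_self_fin_three, det_mul, ht, hs, hd]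
  ring

theorem det_add_smul_vecMulVec_fin_three (M : Matrix (Fin 3) (Fin 3) R) (a n : Fin 3 → R)
    (f : R) : (M + f • vecMulVec a n).det = (1 - f) * M.det + f * (M + vecMulVec a n).det := by
  simp only [det_fin_three, add_apply, smul_apply, vecMulVec_apply, smul_eq_mul]
  ring

/-- The perturbation has rank at most two and its `2 × 2` minors are `f ^ 2` times those of
`n ⊗ b + b ⊗ n`, so the determinant is quadratic in `f`. -/
theorem det_add_smul_add_sq_smul_fin_three (D : Matrix (Fin 3) (Fin 3) R) (b n : Fin 3 → R)
    (α f : R) :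
    (D + f • (vecMulVec n b + vecMulVec b n) + f ^ 2 • (α • vecMulVec n n)).det =
      (1 - f ^ 2) * D.det + f * (1 - f) * (b ⬝ᵥ adjugate D *ᵥ n + n ⬝ᵥ adjugate D *ᵥ b)
      + f ^ 2 * (D + (vecMulVec n b + vecMulVec b n) + α • vecMulVec n n).det := by
  simp only [det_fin_three, adjugate_fin_three, add_apply, smul_apply, vecMulVec_apply,
    smul_eq_mul, mulVec, dotProduct, Fin.sum_univ_three, of_apply, cons_val', cons_val_zero,
    cons_val_one, cons_val_two, head_cons, tail_cons, empty_val', cons_val_fin_one,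
    head_fin_const]
  ring

end FinThree

variable {m : Type*} [Fintype m] [DecidableEq m]

theorem trace_mul_mul_of_mul_self_eq_one {Q : Matrix m m R} (hQ : Q * Q = 1) (N : Matrix m m R) :
    (Q * N * Q).trace = N.trace := by
  rw [trace_mul_comm, ← Matrix.mul_assoc, hQ, Matrix.one_mul]

theorem det_mul_mul_of_mul_self_eq_one {Q : Matrix m m R} (hQ : Q * Q = 1) (N : Matrix m m R) :
    (Q * N * Q).det = N.det := by
  rw [det_mul, det_mul, mul_right_comm, ← det_mul, hQ, det_one, one_mul]

end Matrix

open Matrix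

theorem Matrix.exists_charpoly_eq_of_det_sub_one_eq_zero {M : Matrix (Fin 3) (Fin 3) ℝ}
    (h1 : (M - 1).det = 0) (h2 : 2 < M.trace - M.det) :
    ∃ p q : ℝ, p < 1 ∧ 1 < q ∧ M.charpoly = (X - C p) * (X - C 1) * (X - C q) := by
  set s := M.trace - 1
  set d := M.det
  have hdisc : 0 < s ^ 2 - 4 * d := by nlinarith [sq_nonneg (s - 2)]
  set r := √(s ^ 2 - 4 * d)
  have hr : r ^ 2 = s ^ 2 - 4 * d := Real.sq_sqrt hdisc.le
  have hr0 : 0 < r := Real.sqrt_pos.mpr hdisc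
  have hsig : M.secondInvariant = s + d := by
    rw [det_sub_one_fin_three] at h1
    linarith
  refine ⟨(s - r) / 2, (s + r) / 2, by nlinarith, by nlinarith, ?_⟩
  rw [charpoly_fin_three_eq_iff, hsig]
  exact ⟨by ring, by linear_combination hr / 4, by linear_combination hr / 4⟩

theorem lt_one_and_one_lt_of_charpoly_eq {U : Matrix (Fin 3) (Fin 3) ℝ} {l1 l3 : ℝ}
    (hl1 : l1 ≤ 1) (hl3 : 1 ≤ l3) (h : U.charpoly = (X - C l1) * (X - C 1) * (X - C l3))
    (h2 : 2 < (U * U).trace - (U * U).det) : l1 < 1 ∧ 1 < l3 := by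
  have hne : (1 - l1 ^ 2) * (1 - l3 ^ 2) ≠ 0 := by
    linarith [trace_mul_self_sub_det_mul_self_of_charpoly_eq h]
  refine ⟨hl1.lt_of_ne ?_, hl3.lt_of_ne ?_⟩ <;> rintro rfl <;> simp at hne

theorem cof_eq_transpose_adjugate (M : Matrix (Fin 3) (Fin 3) ℝ) : cof M = (adjugate M)ᵀ := by
  ext i j
  simp [cof, adjugate_fin_succ_eq_det_submatrix]

theorem reflMat_transpose (e : Fin 3 → ℝ) : (reflMat e)ᵀ = reflMat e := by
  simp [reflMat]

theorem reflMat_mul_self {e : Fin 3 → ℝ} (he : e ⬝ᵥ e = 1) : reflMat e * reflMat e = 1 := by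
  have hE : vecMulVec e e * vecMulVec e e = vecMulVec e e := by
    rw [vecMulVec_mul_vecMulVec, he, one_smul]
  simp only [reflMat, add_mul, mul_add, Matrix.smul_mul, Matrix.mul_smul, hE, smul_smul,
    neg_mul_neg, Matrix.one_mul, Matrix.mul_one, Matrix.mul_neg, Matrix.neg_mul]
  module

section ShearCauchyGreen

variable {R m : Type*} [CommRing R] [Fintype m]

/-- The matrix `C(f)`; for symmetric `U` it is `(U + f a ⊗ n)ᵀ (U + f a ⊗ n)`. -/
def shearCauchyGreen (U : Matrix m m R) (a n : m → R) (f : R) : Matrix m m R :=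
  (U + f • vecMulVec n a) * (U + f • vecMulVec a n)

theorem shearCauchyGreen_zero (U : Matrix m m R) (a n : m → R) :
    shearCauchyGreen U a n 0 = U * U := by
  simp [shearCauchyGreen]

theorem shearCauchyGreen_eq {U : Matrix m m R} (hU : Uᵀ = U) (a n : m → R) (f : R) :
    shearCauchyGreen U a n f =
      U * U + f • (vecMulVec n (U *ᵥ a) + vecMulVec (U *ᵥ a) n) +
        f ^ 2 • ((a ⬝ᵥ a) • vecMulVec n n) := by
  have hvec : a ᵥ* U = U *ᵥ a := by rw [← mulVec_transpose, hU]
  simp only [shearCauchyGreen, add_mul, mul_add, Matrix.smul_mul, Matrix.mul_smul, vecMulVec_mul,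
    mul_vecMulVec, hvec, smul_mulVec, vecMulVec_mulVec, op_smul_eq_smul, smul_vecMulVec, smul_smul]
  module

theorem trace_shearCauchyGreen {U : Matrix m m R} (hU : Uᵀ = U) (a n : m → R) (f : R) :
    (shearCauchyGreen U a n f).trace =
      (U * U).trace + 2 * f * (a ⬝ᵥ U *ᵥ n) + f ^ 2 * ((a ⬝ᵥ a) * (n ⬝ᵥ n)) := by
  have hdot : n ⬝ᵥ U *ᵥ a = a ⬝ᵥ U *ᵥ n := by
    rw [dotProduct_mulVec, ← mulVec_transpose, hU, dotProduct_comm]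
  simp only [shearCauchyGreen_eq hU, trace_add, trace_smul, trace_vecMulVec,
    dotProduct_comm (U *ᵥ a) n, hdot, smul_eq_mul]
  ring

/-- Transposing the twinning equation `R Û = U + a ⊗ n` gives `Û Rᵀ = U + n ⊗ a`. -/
theorem shearCauchyGreen_one_eq [DecidableEq m] {U Uhat Rhat : Matrix m m R} {a n : m → R}
    (hU : Uᵀ = U) (hUhat : Uhatᵀ = Uhat) (hRhat : Rhatᵀ * Rhat = 1)
    (h : Rhat * Uhat = U + vecMulVec a n) : shearCauchyGreen U a n 1 = Uhat * Uhat := by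
  have hT : U + vecMulVec n a = Uhat * Rhatᵀ := by
    rw [← hU, ← transpose_vecMulVec, ← transpose_add, ← h, transpose_mul, hUhat]
  rw [shearCauchyGreen, one_smul, one_smul, hT, ← h, Matrix.mul_assoc,
    ← Matrix.mul_assoc Rhatᵀ, hRhat, Matrix.one_mul]

end ShearCauchyGreen

theorem det_shearCauchyGreen {U : Matrix (Fin 3) (Fin 3) ℝ} {a n : Fin 3 → ℝ} (hU : Uᵀ = U)
    (hdet : (U + vecMulVec a n).det = U.det) (f : ℝ) :
    (shearCauchyGreen U a n f).det = (U * U).det := by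
  have hT : U + f • vecMulVec n a = (U + f • vecMulVec a n)ᵀ := by
    rw [transpose_add, transpose_smul, transpose_vecMulVec, hU]
  rw [shearCauchyGreen, det_mul, hT, det_transpose, det_add_smul_vecMulVec_fin_three, hdet,
    det_mul]
  ring

theorem det_shearCauchyGreen_sub_one_eq_zero {U : Matrix (Fin 3) (Fin 3) ℝ} {a n : Fin 3 → ℝ}
    (hU : Uᵀ = U) (hcc2 : CC2 U a n) (h0 : (U * U - 1).det = 0)
    (h1 : (shearCauchyGreen U a n 1 - 1).det = 0) (f : ℝ) :
    (shearCauchyGreen U a n f - 1).det = 0 := by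
  set D := U * U - 1
  have hD : Dᵀ = D := by simp [D, transpose_mul, hU]
  have hcof : a ⬝ᵥ (U * cof D) *ᵥ n = U *ᵥ a ⬝ᵥ adjugate D *ᵥ n := by
    rw [cof_eq_transpose_adjugate, adjugate_transpose, hD, ← mulVec_mulVec, dotProduct_mulVec,
      ← mulVec_transpose, hU]
  have hadj : n ⬝ᵥ adjugate D *ᵥ (U *ᵥ a) = U *ᵥ a ⬝ᵥ adjugate D *ᵥ n := by
    rw [dotProduct_mulVec, ← mulVec_transpose, adjugate_transpose, hD, dotProduct_comm]
  have hexpand (g : ℝ) : (shearCauchyGreen U a n g - 1).det =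
      (1 - g ^ 2) * D.det + g * (1 - g) * (2 * (a ⬝ᵥ (U * cof D) *ᵥ n))
      + g ^ 2 * (shearCauchyGreen U a n 1 - 1).det := by
    rw [shearCauchyGreen_eq hU, shearCauchyGreen_eq hU, add_sub_right_comm, add_sub_right_comm,
      add_sub_right_comm, add_sub_right_comm, det_add_smul_add_sq_smul_fin_three, hadj, hcof,
      one_smul, one_pow, one_smul]
    ring
  rw [hexpand, h1, h0, hcc2]
  ring

theorem two_lt_trace_sub_det_shearCauchyGreen {U : Matrix (Fin 3) (Fin 3) ℝ} {a n : Fin 3 → ℝ}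
    (hU : Uᵀ = U) (ha : a ≠ 0) (hn : n ≠ 0) (hcc3 : CC3 U a n)
    (htr : (shearCauchyGreen U a n 1).trace = (U * U).trace)
    (hdet : (U + vecMulVec a n).det = U.det) {f : ℝ} (hf : f ≠ 1 / 2) :
    2 < (shearCauchyGreen U a n f).trace - (shearCauchyGreen U a n f).det := by
  have hpos : 0 < (a ⬝ᵥ a) * (n ⬝ᵥ n) := by
    have hself {v : Fin 3 → ℝ} (hv : v ≠ 0) : 0 < v ⬝ᵥ v := by
      simpa using dotProduct_self_star_pos_iff.mpr hv
    exact mul_pos (hself ha) (hself hn)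
  have h1 := trace_shearCauchyGreen hU a n 1
  rw [htr] at h1
  have hf' : 0 < (f - 1 / 2) ^ 2 := by positivity [sub_ne_zero.mpr hf]
  rw [trace_shearCauchyGreen hU, det_shearCauchyGreen hU hdet]
  unfold CC3 at hcc3
  nlinarith [mul_pos hpos hf']

theorem stmt_1 (U Uhat Rhat : Matrix (Fin 3) (Fin 3) ℝ) (ehat a n : Fin 3 → ℝ)
    (hU : U.PosDef) (hehat : ehat ⬝ᵥ ehat = 1)
    (hUhat : Uhat = reflMat ehat * U * reflMat ehat)
    (hRhat : SO3 Rhat) (ha : a ≠ 0) (hn : n ≠ 0)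
    (hcomp : Rhat * Uhat = U + Matrix.vecMulVec a n)
    (hcc : CC1 U ∧ CC2 U a n ∧ CC3 U a n) :
    -- for every f ∈ [0,1], f ≠ 1/2 : the eigenvalues of C(f) are p < 1 < q together
    -- with the eigenvalue 1 (so the smallest is < 1 and the largest is > 1)
    (∀ f ∈ Set.Icc (0 : ℝ) 1, f ≠ 1/2 →
      ∃ p q : ℝ, p < 1 ∧ 1 < q ∧
        ((U + f • Matrix.vecMulVec n a) * (U + f • Matrix.vecMulVec a n)).charpoly
          = (X - C p) * (X - C 1) * (X - C q))
    -- in particular the eigenvalues λ₁ ≤ λ₂ ≤ λ₃ of U satisfy λ₁ < 1 < λ₃ and λ₂ = 1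
    ∧ (∃ l1 l3 : ℝ, l1 < 1 ∧ 1 < l3 ∧
        U.charpoly = (X - C l1) * (X - C 1) * (X - C l3)) := by
  obtain ⟨⟨l1, l3, hl1, hl3, hcharU⟩, hcc2, hcc3⟩ := hcc
  have hUs : Uᵀ = U := (isHermitian_iff_isSymm.mp hU.isHermitian).eq
  set Q := reflMat ehat
  have hQ : Q * Q = 1 := reflMat_mul_self hehat
  have hUhat_symm : Uhatᵀ = Uhat := by
    simp only [hUhat, Matrix.mul_assoc, transpose_mul, reflMat_transpose, hUs, Q]
  have hC1 : shearCauchyGreen U a n 1 = Q * (U * U) * Q := by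
    rw [shearCauchyGreen_one_eq hUs hUhat_symm (mul_eq_one_comm.mp hRhat.1) hcomp, hUhat]
    simp only [Matrix.mul_assoc, ← Matrix.mul_assoc Q Q, hQ, Matrix.one_mul]
  have hdet : (U + vecMulVec a n).det = U.det := by
    rw [← hcomp, det_mul, hRhat.2, one_mul, hUhat, det_mul_mul_of_mul_self_eq_one hQ]
  have hUU : (U * U - 1).det = 0 := by
    rw [show U * U - 1 = (U + 1) * (U - 1) by noncomm_ring, det_mul,
      det_sub_one_eq_zero_of_charpoly_eq hcharU, mul_zero]
  have hC1U : (shearCauchyGreen U a n 1 - 1).det = 0 := by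
    rw [hC1, show Q * (U * U) * Q - 1 = Q * (U * U - 1) * Q by
      rw [Matrix.mul_sub, Matrix.sub_mul, Matrix.mul_one, hQ], det_mul_mul_of_mul_self_eq_one hQ,
      hUU]
  have hkey {f : ℝ} (hf : f ≠ 1 / 2) := two_lt_trace_sub_det_shearCauchyGreen hUs ha hn hcc3
    (by rw [hC1, trace_mul_mul_of_mul_self_eq_one hQ]) hdet hf
  refine ⟨fun f _ hf => exists_charpoly_eq_of_det_sub_one_eq_zero
    (det_shearCauchyGreen_sub_one_eq_zero hUs hcc2 hUU hC1U f) (hkey hf), ?_⟩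
  have h0 := hkey (f := 0) (by norm_num)
  rw [shearCauchyGreen_zero] at h0
  obtain ⟨h1, h3⟩ := lt_one_and_one_lt_of_charpoly_eq hl1 hl3 hcharU h0
  exact ⟨l1, l3, h1, h3, hcharU⟩
end

section
/- Let U be a 3×3 real positive-definite symmetric matrix and ê₁ ∈ ℝ³ a unit vector; set Û = (−I + 2 ê₁⊗ê₁) U (−I + 2 ê₁⊗ê₁) and suppose Û ≠ U. Then there exists a unit vector ê₂, not parallel to ê₁, satisfying Û = (−I + 2 ê₂⊗ê₂) U (−I + 2 ê₂⊗ê₂), if and only if ê₁ is perpendicular to some eigenvector of U. Moreover, when ê₁ is perpendicular to an eigenvector of U, such ê₂ is unique up to sign and is perpendicular both to ê₁ and to that eigenvector. -/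
open Matrix

/-!
For symmetric `U` and any `e`, `(-I + 2 e⊗e) U (-I + 2 e⊗e) = U - 2 (e⊗a + a⊗e)` with
`a = U e - (e · U e) e`, for unit `e` the component of `U e` orthogonal to `e`. So `Û ≠ U` says
`a₁ ≠ 0`, and `ê₂` works iff `e₁⊗a₁ + a₁⊗e₁ = e₂⊗a₂ + a₂⊗e₂`. Applying both sides to `e₁` and `e₂`
shows that, for `e₂` not parallel to `e₁`, this forces `e₁ ⊥ e₂`, `a₁ = γ e₂` and `a₂ = γ e₁` with
`γ ≠ 0`. Then `U` preserves the plane of `e₁, e₂`, so the normal `e₁ × e₂` is an eigenvector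
orthogonal to `e₁`, and `e₂ = ± a₁ / |a₁|` is unique up to sign. Conversely, if `v ⊥ e₁` is an
eigenvector then `a₁ ⊥ v`, and `e₂ = a₁ / |a₁|` works because `U` preserves `v^⊥`, the plane of
`e₁, e₂`.
-/

section CommRing

variable {n R : Type*} [CommRing R]

def symOuter (x y : n → R) : Matrix n n R :=
  vecMulVec x y + vecMulVec y x

theorem symOuter_comm (x y : n → R) : symOuter x y = symOuter y x :=
  add_comm _ _

theorem symOuter_zero_right (x : n → R) : symOuter x 0 = 0 := by
  simp [symOuter]

theorem symOuter_smul_right (x y : n → R) (c : R) :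
    symOuter x (c • y) = symOuter (c • x) y := by
  simp [symOuter, vecMulVec_smul, smul_vecMulVec]

variable [Fintype n]

def perpComp (U : Matrix n n R) (e : n → R) : n → R :=
  U *ᵥ e - (e ⬝ᵥ U *ᵥ e) • e

theorem symOuter_mulVec (x y z : n → R) :
    symOuter x y *ᵥ z = (y ⬝ᵥ z) • x + (x ⬝ᵥ z) • y := by
  simp [symOuter, add_mulVec, vecMulVec_mulVec]

theorem Matrix.IsSymm.dotProduct_mulVec_comm {U : Matrix n n R} (hU : U.IsSymm) (x y : n → R) :
    x ⬝ᵥ U *ᵥ y = U *ᵥ x ⬝ᵥ y := by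
  rw [dotProduct_mulVec, ← mulVec_transpose, hU.eq]

theorem mulVec_eq_add_perpComp (U : Matrix n n R) (e : n → R) :
    U *ᵥ e = (e ⬝ᵥ U *ᵥ e) • e + perpComp U e := by
  rw [perpComp, add_sub_cancel]

theorem dotProduct_perpComp {U : Matrix n n R} {e : n → R} (he : e ⬝ᵥ e = 1) :
    e ⬝ᵥ perpComp U e = 0 := by
  simp [perpComp, dotProduct_sub, he]

theorem perpComp_dotProduct_eq_zero_of_mulVec_eq_smul {U : Matrix n n R} (hU : U.IsSymm)
    {e v : n → R} {μ : R} (hv : U *ᵥ v = μ • v) (hev : e ⬝ᵥ v = 0) :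
    perpComp U e ⬝ᵥ v = 0 := by
  simp [perpComp, sub_dotProduct, ← hU.dotProduct_mulVec_comm, hv, hev]

theorem reflect_mul_mul_reflect [DecidableEq n] {U : Matrix n n R} (hU : U.IsSymm) (e : n → R) :
    (-1 + (2 : R) • vecMulVec e e) * U * (-1 + (2 : R) • vecMulVec e e)
      = U - (2 : R) • symOuter e (perpComp U e) := by
  have hvec : e ᵥ* U = U *ᵥ e := by rw [← mulVec_transpose, hU.eq]
  simp only [add_mul, mul_add, neg_mul, mul_neg, one_mul, mul_one, smul_mul_assoc, mul_smul_comm,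
    mul_vecMulVec, vecMulVec_mul, hvec, symOuter, perpComp, vecMulVec_sub, sub_vecMulVec,
    vecMulVec_smul, smul_vecMulVec, dotProduct_mulVec, vecMulVec_mulVec, op_smul_eq_smul]
  module

end CommRing

section Real

variable {n : Type*} [Fintype n]

theorem eq_smul_of_dotProduct_sq_eq_one {x y : n → ℝ} (hx : x ⬝ᵥ x = 1) (hy : y ⬝ᵥ y = 1)
    (hxy : (x ⬝ᵥ y) ^ 2 = 1) : y = (x ⬝ᵥ y) • x := by
  rw [← sub_eq_zero, ← dotProduct_self_eq_zero]
  simp only [dotProduct_sub, sub_dotProduct, dotProduct_smul, smul_dotProduct, smul_eq_mul,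
    hx, hy, dotProduct_comm y x]
  linear_combination -hxy

theorem not_exists_eq_smul_of_dotProduct_eq_zero {x y : n → ℝ} (hy : y ⬝ᵥ y = 1)
    (hxy : x ⬝ᵥ y = 0) : ¬ ∃ c : ℝ, y = c • x := by
  rintro ⟨c, rfl⟩
  simp only [dotProduct_smul, smul_dotProduct, smul_eq_mul] at hy hxy
  rw [hxy, mul_zero] at hy
  exact zero_ne_one hy

theorem exists_unit_smul_eq {a : n → ℝ} (ha : a ≠ 0) :
    ∃ r : ℝ, ∃ e : n → ℝ, r ≠ 0 ∧ e ⬝ᵥ e = 1 ∧ a = r • e := by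
  have hpos : 0 < a ⬝ᵥ a := lt_of_le_of_ne (Finset.sum_nonneg fun i _ => mul_self_nonneg (a i))
    (Ne.symm (dotProduct_self_eq_zero.not.mpr ha))
  have hr : √(a ⬝ᵥ a) ≠ 0 := (Real.sqrt_pos.mpr hpos).ne'
  refine ⟨√(a ⬝ᵥ a), (√(a ⬝ᵥ a))⁻¹ • a, hr, ?_, ?_⟩
  · rw [smul_dotProduct, dotProduct_smul, smul_eq_mul, smul_eq_mul, ← mul_assoc,
      ← Real.sqrt_inv, Real.mul_self_sqrt (inv_nonneg.mpr hpos.le), inv_mul_cancel₀ hpos.ne']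
  · rw [smul_smul, mul_inv_cancel₀ hr, one_smul]

theorem eq_or_eq_neg_of_smul_eq_smul {x y : n → ℝ} {c d : ℝ} (hx : x ⬝ᵥ x = 1)
    (hy : y ⬝ᵥ y = 1) (hc : c ≠ 0) (h : c • x = d • y) : y = x ∨ y = -x := by
  have hsq : c * c = d * d := by
    simpa [smul_dotProduct, dotProduct_smul, hx, hy] using congrArg (fun z => z ⬝ᵥ z) h
  rcases mul_self_eq_mul_self_iff.mp hsq with rfl | rfl
  · exact Or.inl (smul_right_injective _ hc h).symm
  · rw [neg_smul, ← smul_neg] at h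
    exact Or.inr (smul_right_injective _ (neg_ne_zero.mp hc) h).symm

theorem orthogonal_and_swap_of_symOuter_eq {e₁ e₂ a₁ a₂ : n → ℝ}
    (he₁ : e₁ ⬝ᵥ e₁ = 1) (he₂ : e₂ ⬝ᵥ e₂ = 1) (ha₁ : e₁ ⬝ᵥ a₁ = 0) (ha₂ : e₂ ⬝ᵥ a₂ = 0)
    (ha₁0 : a₁ ≠ 0) (hnp : ¬ ∃ c : ℝ, e₂ = c • e₁) (h : symOuter e₁ a₁ = symOuter e₂ a₂) :
    e₁ ⬝ᵥ e₂ = 0 ∧ a₁ = (a₁ ⬝ᵥ e₂) • e₂ ∧ a₂ = (a₁ ⬝ᵥ e₂) • e₁ := by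
  have hS : ∀ z, (a₁ ⬝ᵥ z) • e₁ + (e₁ ⬝ᵥ z) • a₁ = (a₂ ⬝ᵥ z) • e₂ + (e₂ ⬝ᵥ z) • a₂ := fun z => by
    simpa only [symOuter_mulVec] using congrArg (· *ᵥ z) h
  set τ := e₁ ⬝ᵥ e₂
  set γ := a₁ ⬝ᵥ e₂
  have ha₁' : a₁ ⬝ᵥ e₁ = 0 := by rwa [dotProduct_comm]
  have ha₂' : a₂ ⬝ᵥ e₂ = 0 := by rwa [dotProduct_comm]
  have hτ : e₂ ⬝ᵥ e₁ = τ := dotProduct_comm _ _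
  have eq₁ : a₁ = (a₂ ⬝ᵥ e₁) • e₂ + τ • a₂ := by simpa [ha₁', he₁, hτ] using hS e₁
  have eq₂ : a₂ = γ • e₁ + τ • a₁ := by simpa [ha₂', he₂] using (hS e₂).symm
  have hγτ : γ * τ = 0 := by
    have := congrArg (· ⬝ᵥ e₂) eq₂
    simp only [add_dotProduct, smul_dotProduct, smul_eq_mul, ha₂'] at this
    linear_combination -this / 2
  have hd : a₂ ⬝ᵥ e₁ = γ := by
    rw [eq₂]
    simp [add_dotProduct, smul_dotProduct, he₁, ha₁']
  have hsolve : (1 - τ ^ 2) • a₁ = γ • e₂ + (τ * γ) • e₁ := by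
    have h₁ : a₁ = γ • e₂ + τ • (γ • e₁ + τ • a₁) := by rw [← eq₂, ← hd]; exact eq₁
    linear_combination (norm := module) h₁
  have hτ0 : τ = 0 := by
    by_contra hτ0
    have hγ : γ = 0 := (mul_eq_zero.mp hγτ).resolve_right hτ0
    rw [hγ, zero_smul, mul_zero, zero_smul, add_zero] at hsolve
    have hτ1 : τ ^ 2 = 1 := by
      linarith [(smul_eq_zero.mp hsolve).resolve_right ha₁0]
    exact hnp ⟨τ, eq_smul_of_dotProduct_sq_eq_one he₁ he₂ hτ1⟩
  rw [hτ0] at hsolve eq₂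
  refine ⟨hτ0, ?_, ?_⟩
  · simpa using hsolve
  · simpa using eq₂

end Real

section Cross

variable {R : Type*} [CommRing R]

theorem cross_dot_cross_self_of_orthonormal {e₁ e₂ : Fin 3 → R} (he₁ : e₁ ⬝ᵥ e₁ = 1)
    (he₂ : e₂ ⬝ᵥ e₂ = 1) (h : e₁ ⬝ᵥ e₂ = 0) : e₁ ⨯₃ e₂ ⬝ᵥ e₁ ⨯₃ e₂ = 1 := by
  rw [cross_dot_cross, he₁, he₂, dotProduct_comm e₂, h]
  ring

theorem eq_add_add_cross_of_orthonormal {e₁ e₂ : Fin 3 → R} (he₁ : e₁ ⬝ᵥ e₁ = 1)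
    (he₂ : e₂ ⬝ᵥ e₂ = 1) (h : e₁ ⬝ᵥ e₂ = 0) (x : Fin 3 → R) :
    x = (e₁ ⬝ᵥ x) • e₁ + (e₂ ⬝ᵥ x) • e₂ + (e₁ ⨯₃ e₂ ⬝ᵥ x) • e₁ ⨯₃ e₂ := by
  have hw := cross_dot_cross_self_of_orthonormal he₁ he₂ h
  have h₁ : e₁ ⨯₃ e₂ ⨯₃ e₁ = e₂ := by
    rw [cross_cross_eq_smul_sub_smul, he₁, dotProduct_comm e₂, h, one_smul, zero_smul, sub_zero]
  have h₂ : e₁ ⨯₃ e₂ ⨯₃ e₂ = -e₁ := by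
    rw [cross_cross_eq_smul_sub_smul, he₂, h, one_smul, zero_smul, zero_sub]
  have key := cross_cross_eq_smul_sub_smul' (e₁ ⨯₃ e₂) x (e₁ ⨯₃ e₂)
  rw [hw, one_smul, cross_cross_eq_smul_sub_smul' x, map_sub, map_smul, map_smul, h₁, h₂,
    dotProduct_comm x e₂, dotProduct_comm x, sub_eq_iff_eq_add] at key
  rw [key]
  module

theorem eq_smul_cross_of_orthogonal {e₁ e₂ x : Fin 3 → R} (he₁ : e₁ ⬝ᵥ e₁ = 1) (he₂ : e₂ ⬝ᵥ e₂ = 1)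
    (h : e₁ ⬝ᵥ e₂ = 0) (hx₁ : e₁ ⬝ᵥ x = 0) (hx₂ : e₂ ⬝ᵥ x = 0) :
    x = (e₁ ⨯₃ e₂ ⬝ᵥ x) • e₁ ⨯₃ e₂ := by
  simpa [hx₁, hx₂] using eq_add_add_cross_of_orthonormal he₁ he₂ h x

end Cross

section Fin3

variable {U : Matrix (Fin 3) (Fin 3) ℝ} {e₁ e₂ : Fin 3 → ℝ}

theorem mulVec_cross_eq_smul_of_perpComp (hU : U.IsSymm) (he₁ : e₁ ⬝ᵥ e₁ = 1)
    (he₂ : e₂ ⬝ᵥ e₂ = 1) (h : e₁ ⬝ᵥ e₂ = 0) {c d : ℝ} (h₁ : perpComp U e₁ = c • e₂)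
    (h₂ : perpComp U e₂ = d • e₁) :
    U *ᵥ (e₁ ⨯₃ e₂) = (e₁ ⨯₃ e₂ ⬝ᵥ U *ᵥ (e₁ ⨯₃ e₂)) • e₁ ⨯₃ e₂ := by
  apply eq_smul_cross_of_orthogonal he₁ he₂ h
  · rw [hU.dotProduct_mulVec_comm, mulVec_eq_add_perpComp, h₁]
    simp only [add_dotProduct, smul_dotProduct, dot_self_cross, dot_cross_self, smul_zero,
      add_zero]
  · rw [hU.dotProduct_mulVec_comm, mulVec_eq_add_perpComp, h₂]
    simp only [add_dotProduct, smul_dotProduct, dot_self_cross, dot_cross_self, smul_zero,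
      add_zero]

theorem perpComp_eq_smul_of_mulVec_eq_smul (hU : U.IsSymm) (he₁ : e₁ ⬝ᵥ e₁ = 1)
    (he₂ : e₂ ⬝ᵥ e₂ = 1) (h : e₁ ⬝ᵥ e₂ = 0) {v : Fin 3 → ℝ} {μ : ℝ} (hv0 : v ≠ 0)
    (hv : U *ᵥ v = μ • v) (hv₁ : e₁ ⬝ᵥ v = 0) (hv₂ : e₂ ⬝ᵥ v = 0) :
    perpComp U e₂ = (e₁ ⬝ᵥ U *ᵥ e₂) • e₁ := by
  have hvw := eq_smul_cross_of_orthogonal he₁ he₂ h hv₁ hv₂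
  have hc : e₁ ⨯₃ e₂ ⬝ᵥ v ≠ 0 := fun h0 => hv0 (by rw [hvw, h0, zero_smul])
  have hvU : v ⬝ᵥ U *ᵥ e₂ = 0 := by
    rw [hU.dotProduct_mulVec_comm, hv, smul_dotProduct, dotProduct_comm, hv₂, smul_zero]
  have hwU : e₁ ⨯₃ e₂ ⬝ᵥ U *ᵥ e₂ = 0 := by
    rw [hvw, smul_dotProduct, smul_eq_mul] at hvU
    exact (mul_eq_zero.mp hvU).resolve_left hc
  have hdec := eq_add_add_cross_of_orthonormal he₁ he₂ h (U *ᵥ e₂)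
  rw [hwU, zero_smul, add_zero] at hdec
  rw [perpComp, sub_eq_iff_eq_add]
  exact hdec

theorem reflMat_mul_mul_reflMat (hU : U.IsSymm) (e : Fin 3 → ℝ) :
    reflMat e * U * reflMat e = U - (2 : ℝ) • symOuter e (perpComp U e) :=
  reflect_mul_mul_reflect hU e

theorem reflMat_conj_eq_iff (hU : U.IsSymm) :
    reflMat e₁ * U * reflMat e₁ = reflMat e₂ * U * reflMat e₂ ↔
      symOuter e₁ (perpComp U e₁) = symOuter e₂ (perpComp U e₂) := by
  rw [reflMat_mul_mul_reflMat hU, reflMat_mul_mul_reflMat hU, sub_right_inj]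
  exact (smul_right_injective _ two_ne_zero).eq_iff

theorem orthogonal_and_swap_of_reflMat_conj_eq (hU : U.IsSymm) (he₁ : e₁ ⬝ᵥ e₁ = 1)
    (he₂ : e₂ ⬝ᵥ e₂ = 1) (ha : perpComp U e₁ ≠ 0) (hnp : ¬ ∃ c : ℝ, e₂ = c • e₁)
    (h : reflMat e₁ * U * reflMat e₁ = reflMat e₂ * U * reflMat e₂) :
    e₁ ⬝ᵥ e₂ = 0 ∧ perpComp U e₁ = (perpComp U e₁ ⬝ᵥ e₂) • e₂ ∧
      perpComp U e₂ = (perpComp U e₁ ⬝ᵥ e₂) • e₁ :=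
  orthogonal_and_swap_of_symOuter_eq he₁ he₂ (dotProduct_perpComp he₁) (dotProduct_perpComp he₂)
    ha hnp ((reflMat_conj_eq_iff hU).mp h)

theorem exists_eigenvector_of_reflMat_conj_eq (hU : U.IsSymm) (he₁ : e₁ ⬝ᵥ e₁ = 1)
    (he₂ : e₂ ⬝ᵥ e₂ = 1) (ha : perpComp U e₁ ≠ 0) (hnp : ¬ ∃ c : ℝ, e₂ = c • e₁)
    (h : reflMat e₁ * U * reflMat e₁ = reflMat e₂ * U * reflMat e₂) :
    ∃ (v : Fin 3 → ℝ) (μ : ℝ), v ≠ 0 ∧ U *ᵥ v = μ • v ∧ e₁ ⬝ᵥ v = 0 := by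
  obtain ⟨h₁₂, h₁, h₂⟩ := orthogonal_and_swap_of_reflMat_conj_eq hU he₁ he₂ ha hnp h
  have hw := cross_dot_cross_self_of_orthonormal he₁ he₂ h₁₂
  exact ⟨e₁ ⨯₃ e₂, _, fun h0 => by simp [h0] at hw,
    mulVec_cross_eq_smul_of_perpComp hU he₁ he₂ h₁₂ h₁ h₂, dot_self_cross _ _⟩

theorem exists_reflMat_conj_eq_of_eigenvector (hU : U.IsSymm) (he₁ : e₁ ⬝ᵥ e₁ = 1)
    (ha : perpComp U e₁ ≠ 0) {v : Fin 3 → ℝ} {μ : ℝ} (hv0 : v ≠ 0) (hv : U *ᵥ v = μ • v)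
    (hv₁ : e₁ ⬝ᵥ v = 0) :
    ∃ e₂ : Fin 3 → ℝ, e₂ ⬝ᵥ e₂ = 1 ∧ (¬ ∃ c : ℝ, e₂ = c • e₁) ∧
      reflMat e₁ * U * reflMat e₁ = reflMat e₂ * U * reflMat e₂ := by
  obtain ⟨r, e₂, hr, he₂, ha₁⟩ := exists_unit_smul_eq ha
  have h₁₂ : e₁ ⬝ᵥ e₂ = 0 := by
    have := dotProduct_perpComp (U := U) he₁
    rw [ha₁, dotProduct_smul, smul_eq_mul] at this
    exact (mul_eq_zero.mp this).resolve_left hr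
  have hv₂ : e₂ ⬝ᵥ v = 0 := by
    have := perpComp_dotProduct_eq_zero_of_mulVec_eq_smul hU hv hv₁
    rw [ha₁, smul_dotProduct, smul_eq_mul] at this
    exact (mul_eq_zero.mp this).resolve_left hr
  have hr' : e₁ ⬝ᵥ U *ᵥ e₂ = r := by
    rw [hU.dotProduct_mulVec_comm, mulVec_eq_add_perpComp, ha₁]
    simp [add_dotProduct, smul_dotProduct, h₁₂, he₂]
  refine ⟨e₂, he₂, not_exists_eq_smul_of_dotProduct_eq_zero he₂ h₁₂,
    (reflMat_conj_eq_iff hU).mpr ?_⟩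
  rw [perpComp_eq_smul_of_mulVec_eq_smul hU he₁ he₂ h₁₂ hv0 hv hv₁ hv₂, hr', ha₁,
    symOuter_smul_right, symOuter_comm]

theorem dotProduct_eq_zero_of_reflMat_conj_eq (hU : U.IsSymm) (he₁ : e₁ ⬝ᵥ e₁ = 1)
    (he₂ : e₂ ⬝ᵥ e₂ = 1) (ha : perpComp U e₁ ≠ 0) (hnp : ¬ ∃ c : ℝ, e₂ = c • e₁)
    (h : reflMat e₁ * U * reflMat e₁ = reflMat e₂ * U * reflMat e₂) {v : Fin 3 → ℝ} {μ : ℝ}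
    (hv : U *ᵥ v = μ • v) (hv₁ : e₁ ⬝ᵥ v = 0) :
    e₂ ⬝ᵥ e₁ = 0 ∧ e₂ ⬝ᵥ v = 0 := by
  obtain ⟨h₁₂, h₁, -⟩ := orthogonal_and_swap_of_reflMat_conj_eq hU he₁ he₂ ha hnp h
  refine ⟨by rwa [dotProduct_comm], ?_⟩
  have := perpComp_dotProduct_eq_zero_of_mulVec_eq_smul hU hv hv₁
  rw [h₁, smul_dotProduct, smul_eq_mul] at this
  exact (mul_eq_zero.mp this).resolve_left (left_ne_zero_of_smul (h₁ ▸ ha))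

theorem eq_or_eq_neg_of_reflMat_conj_eq (hU : U.IsSymm) (he₁ : e₁ ⬝ᵥ e₁ = 1)
    (ha : perpComp U e₁ ≠ 0) {e₂ e₂' : Fin 3 → ℝ}
    (he₂ : e₂ ⬝ᵥ e₂ = 1) (hnp : ¬ ∃ c : ℝ, e₂ = c • e₁)
    (h : reflMat e₁ * U * reflMat e₁ = reflMat e₂ * U * reflMat e₂)
    (he₂' : e₂' ⬝ᵥ e₂' = 1) (hnp' : ¬ ∃ c : ℝ, e₂' = c • e₁)
    (h' : reflMat e₁ * U * reflMat e₁ = reflMat e₂' * U * reflMat e₂') :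
    e₂' = e₂ ∨ e₂' = -e₂ := by
  obtain ⟨-, h₁, -⟩ := orthogonal_and_swap_of_reflMat_conj_eq hU he₁ he₂ ha hnp h
  obtain ⟨-, h₁', -⟩ := orthogonal_and_swap_of_reflMat_conj_eq hU he₁ he₂' ha hnp' h'
  exact eq_or_eq_neg_of_smul_eq_smul he₂ he₂' (left_ne_zero_of_smul (h₁ ▸ ha)) (h₁.symm.trans h₁')

end Fin3

theorem stmt_4 (U : Matrix (Fin 3) (Fin 3) ℝ) (e1 : Fin 3 → ℝ)
    (hU : U.PosDef) (he1 : e1 ⬝ᵥ e1 = 1)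
    (Uhat : Matrix (Fin 3) (Fin 3) ℝ)
    (hUhat : Uhat = reflMat e1 * U * reflMat e1)
    (hne : Uhat ≠ U) :
    -- existence of a second non-parallel unit vector ê₂ iff ê₁ ⊥ some eigenvector of U
    ((∃ e2 : Fin 3 → ℝ, e2 ⬝ᵥ e2 = 1 ∧ (¬ ∃ c : ℝ, e2 = c • e1) ∧
        Uhat = reflMat e2 * U * reflMat e2)
      ↔ (∃ (v : Fin 3 → ℝ) (μ : ℝ), v ≠ 0 ∧ U.mulVec v = μ • v ∧ e1 ⬝ᵥ v = 0))
    -- moreover, when ê₁ ⊥ an eigenvector v of U, such ê₂ is unique up to sign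
    -- and is perpendicular to both ê₁ and v
    ∧ (∀ (v : Fin 3 → ℝ) (μ : ℝ), v ≠ 0 → U.mulVec v = μ • v → e1 ⬝ᵥ v = 0 →
        (∀ e2 : Fin 3 → ℝ, e2 ⬝ᵥ e2 = 1 → (¬ ∃ c : ℝ, e2 = c • e1) →
          Uhat = reflMat e2 * U * reflMat e2 →
          e2 ⬝ᵥ e1 = 0 ∧ e2 ⬝ᵥ v = 0) ∧
        (∀ e2 e2' : Fin 3 → ℝ,
          e2 ⬝ᵥ e2 = 1 → (¬ ∃ c : ℝ, e2 = c • e1) →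
            Uhat = reflMat e2 * U * reflMat e2 →
          e2' ⬝ᵥ e2' = 1 → (¬ ∃ c : ℝ, e2' = c • e1) →
            Uhat = reflMat e2' * U * reflMat e2' →
          e2' = e2 ∨ e2' = -e2)) := by
  subst hUhat
  have hS : U.IsSymm := isHermitian_iff_isSymm.mp hU.isHermitian
  have ha : perpComp U e1 ≠ 0 := fun h0 => hne <| by
    rw [reflMat_mul_mul_reflMat hS, h0, symOuter_zero_right, smul_zero, sub_zero]
  refine ⟨⟨fun ⟨e2, he2, hnp, h⟩ => exists_eigenvector_of_reflMat_conj_eq hS he1 he2 ha hnp h,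
    fun ⟨v, μ, hv0, hv, hv1⟩ => exists_reflMat_conj_eq_of_eigenvector hS he1 ha hv0 hv hv1⟩,
    fun v μ _ hv hv1 =>
      ⟨fun e2 he2 hnp h => dotProduct_eq_zero_of_reflMat_conj_eq hS he1 he2 ha hnp h hv hv1,
        fun e2 e2' he2 hnp h he2' hnp' h' =>
          eq_or_eq_neg_of_reflMat_conj_eq hS he1 ha he2 hnp h he2' hnp' h'⟩⟩
end

section
/- Let U = λ₁ v₁⊗v₁ + v₂⊗v₂ + λ₃ v₃⊗v₃, where v₁, v₂, v₃ ∈ ℝ³ are orthonormal and 0 < λ₁ < 1 < λ₃. Let ê be a unit vector with ê · v₂ ≠ 0, set Û = (−I + 2 ê⊗ê) U (−I + 2 ê⊗ê), and assume Û ≠ U. Define the Type I vectors n_I = ê and a_I = 2 (U⁻¹ê/|U⁻¹ê|² − U ê). Then the following three conditions are equivalent: (i) (a_I · v₂)(n_I · v₂) = 0; (ii) a_I · v₂ = 0; (iii) |U⁻¹ê| = 1. -/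
/-! Both `U` and `U⁻¹` are symmetric and fix `v₂`, so `(U⁻¹ ê) · v₂ = (U ê) · v₂ = ê · v₂` and
`a_I · v₂ = 2 (|U⁻¹ ê|⁻² - 1) (ê · v₂)`. Since `ê · v₂ ≠ 0`, each condition says `|U⁻¹ ê| = 1`.
Invertibility of `U` comes from `U = Oᵀ diag(λ₁, 1, λ₃) O`, where the rows `vᵢ` of `O` are
orthonormal, so that `det U = λ₁ λ₃`. -/

open Matrix

namespace Matrix

variable {n R : Type*} [Fintype n]

theorem sum_smul_vecMulVec_self [DecidableEq n] [CommSemiring R] (v : n → n → R) (d : n → R) :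
    ∑ i, d i • vecMulVec (v i) (v i) = (of v)ᵀ * diagonal d * of v := by
  ext j k
  simp only [sum_apply, smul_apply, vecMulVec_apply, mul_apply, diagonal_apply, transpose_apply,
    of_apply, mul_ite, mul_zero, Finset.sum_ite_eq', Finset.mem_univ, if_true, smul_eq_mul]
  exact Finset.sum_congr rfl fun i _ => by ring

theorem IsSymm.transpose_mul_mul [CommSemiring R] {A : Matrix n n R} (hA : A.IsSymm)
    (B : Matrix n n R) : (Bᵀ * A * B).IsSymm := by
  rw [IsSymm, transpose_mul, transpose_mul, transpose_transpose, hA.eq, mul_assoc]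

theorem det_transpose_mul_diagonal_mul [DecidableEq n] [CommRing R] {O : Matrix n n R}
    (hO : O * Oᵀ = 1) (d : n → R) : (Oᵀ * diagonal d * O).det = ∏ i, d i := by
  rw [det_mul, det_mul, det_diagonal, mul_right_comm, ← det_mul, det_mul_comm, hO, det_one,
    one_mul]

theorem of_vecCons_mul_transpose_eq_one [CommSemiring R] {u v w : Fin 3 → R}
    (hu : u ⬝ᵥ u = 1) (hv : v ⬝ᵥ v = 1) (hw : w ⬝ᵥ w = 1)
    (huv : u ⬝ᵥ v = 0) (huw : u ⬝ᵥ w = 0) (hvw : v ⬝ᵥ w = 0) :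
    of ![u, v, w] * (of ![u, v, w])ᵀ = 1 := by
  ext i j
  change ![u, v, w] i ⬝ᵥ ![u, v, w] j = (1 : Matrix (Fin 3) (Fin 3) R) i j
  fin_cases i <;> fin_cases j <;>
    simp [hu, hv, hw, huv, huw, hvw, dotProduct_comm v u, dotProduct_comm w u,
      dotProduct_comm w v]

theorem IsSymm.mulVec_dotProduct_of_mulVec_eq_self [CommSemiring R] {A : Matrix n n R}
    (hA : A.IsSymm) {v : n → R} (hv : A *ᵥ v = v) (w : n → R) : A *ᵥ w ⬝ᵥ v = w ⬝ᵥ v := by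
  rw [dotProduct_comm, dotProduct_mulVec, ← mulVec_transpose, hA.eq, hv, dotProduct_comm]

theorem inv_mulVec_eq_self_of_mulVec_eq_self [DecidableEq n] [CommRing R] {A : Matrix n n R}
    (hA : IsUnit A.det) {v : n → R} (hv : A *ᵥ v = v) : A⁻¹ *ᵥ v = v := by
  conv_lhs => rw [← hv]
  rw [mulVec_mulVec, nonsing_inv_mul _ hA, one_mulVec]

theorem IsSymm.smul_inv_mulVec_sub_mulVec_dotProduct [DecidableEq n] [CommRing R]
    {A : Matrix n n R} (hA : A.IsSymm) (hdet : IsUnit A.det) {v : n → R} (hv : A *ᵥ v = v)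
    (c : R) (w : n → R) : (c • A⁻¹ *ᵥ w - A *ᵥ w) ⬝ᵥ v = (c - 1) * (w ⬝ᵥ v) := by
  rw [sub_dotProduct, smul_dotProduct, hA.inv.mulVec_dotProduct_of_mulVec_eq_self
    (inv_mulVec_eq_self_of_mulVec_eq_self hdet hv), hA.mulVec_dotProduct_of_mulVec_eq_self hv,
    smul_eq_mul, sub_one_mul]

end Matrix

theorem stmt_6_general (U : Matrix (Fin 3) (Fin 3) ℝ) (v1 v2 v3 e : Fin 3 → ℝ) (l1 l3 : ℝ)
    (hl1 : 0 < l1) (hl3 : 1 < l3)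
    (hv1 : v1 ⬝ᵥ v1 = 1) (hv2 : v2 ⬝ᵥ v2 = 1) (hv3 : v3 ⬝ᵥ v3 = 1)
    (h12 : v1 ⬝ᵥ v2 = 0) (h13 : v1 ⬝ᵥ v3 = 0) (h23 : v2 ⬝ᵥ v3 = 0)
    (hU : U = l1 • Matrix.vecMulVec v1 v1 + Matrix.vecMulVec v2 v2
        + l3 • Matrix.vecMulVec v3 v3)
    (hev2 : e ⬝ᵥ v2 ≠ 0)
    (nI aI : Fin 3 → ℝ) (hnI : nI = e)
    (haI : aI = (2 : ℝ) • ((U⁻¹.mulVec e ⬝ᵥ U⁻¹.mulVec e)⁻¹ • U⁻¹.mulVec e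
        - U.mulVec e)) :
    ((aI ⬝ᵥ v2) * (nI ⬝ᵥ v2) = 0 ↔ aI ⬝ᵥ v2 = 0) ∧
    (aI ⬝ᵥ v2 = 0 ↔ Real.sqrt (U⁻¹.mulVec e ⬝ᵥ U⁻¹.mulVec e) = 1) := by
  set O : Matrix (Fin 3) (Fin 3) ℝ := of ![v1, v2, v3]
  have hUO : U = Oᵀ * diagonal ![l1, 1, l3] * O := by
    rw [hU, ← sum_smul_vecMulVec_self]
    simp [Fin.sum_univ_three]
  have hsymm : U.IsSymm := hUO ▸ (isSymm_diagonal _).transpose_mul_mul O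
  have hdet : IsUnit U.det := by
    rw [hUO, det_transpose_mul_diagonal_mul
      (of_vecCons_mul_transpose_eq_one hv1 hv2 hv3 h12 h13 h23)]
    simp [Fin.prod_univ_three, hl1.ne', (zero_lt_one.trans hl3).ne']
  have hUv2 : U *ᵥ v2 = v2 := by
    simp [hU, add_mulVec, smul_mulVec, vecMulVec_mulVec, h12, hv2, dotProduct_comm v3 v2, h23]
  have ha : aI ⬝ᵥ v2 = 2 * ((U⁻¹ *ᵥ e ⬝ᵥ U⁻¹ *ᵥ e)⁻¹ - 1) * (e ⬝ᵥ v2) := by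
    rw [haI, smul_dotProduct, hsymm.smul_inv_mulVec_sub_mulVec_dotProduct hdet hUv2, smul_eq_mul,
      mul_assoc]
  subst hnI
  refine ⟨⟨fun h => (mul_eq_zero.mp h).resolve_right hev2, fun h => by rw [h, zero_mul]⟩, ?_⟩
  rw [ha, Real.sqrt_eq_one]
  simp [hev2, sub_eq_zero]

theorem stmt_6 (U : Matrix (Fin 3) (Fin 3) ℝ) (v1 v2 v3 e : Fin 3 → ℝ) (l1 l3 : ℝ)
    (hl1 : 0 < l1) (hl1' : l1 < 1) (hl3 : 1 < l3)
    (hv1 : v1 ⬝ᵥ v1 = 1) (hv2 : v2 ⬝ᵥ v2 = 1) (hv3 : v3 ⬝ᵥ v3 = 1)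
    (h12 : v1 ⬝ᵥ v2 = 0) (h13 : v1 ⬝ᵥ v3 = 0) (h23 : v2 ⬝ᵥ v3 = 0)
    (hU : U = l1 • Matrix.vecMulVec v1 v1 + Matrix.vecMulVec v2 v2
        + l3 • Matrix.vecMulVec v3 v3)
    (he : e ⬝ᵥ e = 1) (hev2 : e ⬝ᵥ v2 ≠ 0)
    (hne : reflMat e * U * reflMat e ≠ U)
    (nI aI : Fin 3 → ℝ) (hnI : nI = e)
    (haI : aI = (2 : ℝ) • ((U⁻¹.mulVec e ⬝ᵥ U⁻¹.mulVec e)⁻¹ • U⁻¹.mulVec e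
        - U.mulVec e)) :
    ((aI ⬝ᵥ v2) * (nI ⬝ᵥ v2) = 0 ↔ aI ⬝ᵥ v2 = 0) ∧
    (aI ⬝ᵥ v2 = 0 ↔ Real.sqrt (U⁻¹.mulVec e ⬝ᵥ U⁻¹.mulVec e) = 1) :=
  stmt_6_general U v1 v2 v3 e l1 l3 hl1 hl3 hv1 hv2 hv3 h12 h13 h23 hU hev2 nI aI hnI haI
end

section
/- Let U = λ₁ v₁⊗v₁ + v₂⊗v₂ + λ₃ v₃⊗v₃, where v₁, v₂, v₃ ∈ ℝ³ are orthonormal and 0 < λ₁ < 1 < λ₃. Let ê be a unit vector with ê · v₂ ≠ 0, set Û = (−I + 2 ê⊗ê) U (−I + 2 ê⊗ê), and assume Û ≠ U. Define the Type II vectors n_II = 2 (ê − U²ê/|U ê|²) and a_II = U ê. Then the following three conditions are equivalent: (i) (a_II · v₂)(n_II · v₂) = 0; (ii) n_II · v₂ = 0; (iii) |U ê| = 1. -/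
open Matrix

/-!
Since `v₂` is a unit eigenvector of the symmetric matrix `U` with eigenvalue `1`, every
`x` satisfies `(U x) · v₂ = x · v₂`. Hence `a_II · v₂ = ê · v₂ ≠ 0` and
`n_II · v₂ = 2 (ê · v₂) (1 - |U ê|⁻²)`, which vanishes exactly when `|U ê| = 1`.
-/

section

variable {R n : Type*} [CommRing R] [Fintype n]

theorem vecMulVec_self_mulVec_dotProduct (u x w : n → R) :
    vecMulVec u u *ᵥ x ⬝ᵥ w = (u ⬝ᵥ x) * (u ⬝ᵥ w) := by
  rw [vecMulVec_mulVec, op_smul_eq_smul, smul_dotProduct, smul_eq_mul]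

theorem mulVec_dotProduct_of_orthonormal_middle {v1 v2 v3 : n → R} (l1 l3 : R)
    (hv2 : v2 ⬝ᵥ v2 = 1) (h12 : v1 ⬝ᵥ v2 = 0) (h23 : v2 ⬝ᵥ v3 = 0) (x : n → R) :
    (l1 • vecMulVec v1 v1 + vecMulVec v2 v2 + l3 • vecMulVec v3 v3) *ᵥ x ⬝ᵥ v2 = x ⬝ᵥ v2 := by
  simp only [add_mulVec, smul_mulVec, add_dotProduct, smul_dotProduct,
    vecMulVec_self_mulVec_dotProduct, h12, dotProduct_comm v3 v2, h23, hv2, smul_eq_mul,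
    mul_zero, zero_add, add_zero, mul_one]
  exact dotProduct_comm v2 x

end

theorem stmt_7_general (U : Matrix (Fin 3) (Fin 3) ℝ) (v1 v2 v3 e : Fin 3 → ℝ) (l1 l3 : ℝ)
    (hv2 : v2 ⬝ᵥ v2 = 1)
    (h12 : v1 ⬝ᵥ v2 = 0) (h23 : v2 ⬝ᵥ v3 = 0)
    (hU : U = l1 • Matrix.vecMulVec v1 v1 + Matrix.vecMulVec v2 v2
        + l3 • Matrix.vecMulVec v3 v3)
    (hev2 : e ⬝ᵥ v2 ≠ 0)
    (nII aII : Fin 3 → ℝ)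
    (hnII : nII = (2 : ℝ) • (e - (U.mulVec e ⬝ᵥ U.mulVec e)⁻¹ • (U * U).mulVec e))
    (haII : aII = U.mulVec e) :
    ((aII ⬝ᵥ v2) * (nII ⬝ᵥ v2) = 0 ↔ nII ⬝ᵥ v2 = 0) ∧
    (nII ⬝ᵥ v2 = 0 ↔ Real.sqrt (U.mulVec e ⬝ᵥ U.mulVec e) = 1) := by
  have hU2 (x : Fin 3 → ℝ) : U *ᵥ x ⬝ᵥ v2 = x ⬝ᵥ v2 := by
    rw [hU]; exact mulVec_dotProduct_of_orthonormal_middle l1 l3 hv2 h12 h23 x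
  set s := U *ᵥ e ⬝ᵥ U *ᵥ e
  have ha : aII ⬝ᵥ v2 = e ⬝ᵥ v2 := by rw [haII, hU2]
  have hn : nII ⬝ᵥ v2 = 2 * (e ⬝ᵥ v2) * (1 - s⁻¹) := by
    rw [hnII, ← mulVec_mulVec, smul_dotProduct, sub_dotProduct, smul_dotProduct, hU2, hU2,
      smul_eq_mul, smul_eq_mul]
    ring
  constructor
  · rw [ha, mul_eq_zero, or_iff_right hev2]
  · rw [hn, Real.sqrt_eq_one, mul_eq_zero, or_iff_right (mul_ne_zero two_ne_zero hev2),
      sub_eq_zero, eq_comm, inv_eq_one]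

theorem stmt_7 (U : Matrix (Fin 3) (Fin 3) ℝ) (v1 v2 v3 e : Fin 3 → ℝ) (l1 l3 : ℝ)
    (hl1 : 0 < l1) (hl1' : l1 < 1) (hl3 : 1 < l3)
    (hv1 : v1 ⬝ᵥ v1 = 1) (hv2 : v2 ⬝ᵥ v2 = 1) (hv3 : v3 ⬝ᵥ v3 = 1)
    (h12 : v1 ⬝ᵥ v2 = 0) (h13 : v1 ⬝ᵥ v3 = 0) (h23 : v2 ⬝ᵥ v3 = 0)
    (hU : U = l1 • Matrix.vecMulVec v1 v1 + Matrix.vecMulVec v2 v2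
        + l3 • Matrix.vecMulVec v3 v3)
    (he : e ⬝ᵥ e = 1) (hev2 : e ⬝ᵥ v2 ≠ 0)
    (hne : reflMat e * U * reflMat e ≠ U)
    (nII aII : Fin 3 → ℝ)
    (hnII : nII = (2 : ℝ) • (e - (U.mulVec e ⬝ᵥ U.mulVec e)⁻¹ • (U * U).mulVec e))
    (haII : aII = U.mulVec e) :
    ((aII ⬝ᵥ v2) * (nII ⬝ᵥ v2) = 0 ↔ nII ⬝ᵥ v2 = 0) ∧
    (nII ⬝ᵥ v2 = 0 ↔ Real.sqrt (U.mulVec e ⬝ᵥ U.mulVec e) = 1) :=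
  stmt_7_general U v1 v2 v3 e l1 l3 hv2 h12 h23 hU hev2 nII aII hnII haII
end

section
/- Let S be a nonzero symmetric 3×3 real matrix with eigenvalues s₁ ≤ s₂ ≤ s₃. Then there exist nonzero vectors a, n ∈ ℝ³ with S = (1/2)(a ⊗ n + n ⊗ a) if and only if the middle eigenvalue s₂ equals zero. Moreover, if S = s₁ e₁⊗e₁ + s₃ e₃⊗e₃ with e₁, e₃ ∈ ℝ³ orthonormal and s₁ ≤ 0 ≤ s₃, then the vectors a = √(−s₁) e₁ + √(s₃) e₃ and n = −√(−s₁) e₁ + √(s₃) e₃ satisfy S = (1/2)(a ⊗ n + n ⊗ a). -/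
/-!
If `S = ½ (a ⊗ n + n ⊗ a)`, then `det (t - S) = t³ - (a·n) t² + ((a·n)² - |a|²|n|²)/4 · t`, so
`s₁s₂s₃ = 0` and, by Cauchy–Schwarz, `s₁s₂ + s₁s₃ + s₂s₃ ≤ 0`; for ordered `sᵢ` this forces
`s₂ = 0`. Conversely, if `s₂ = 0` the spectral theorem gives `S = s₁ e₁ ⊗ e₁ + s₃ e₃ ⊗ e₃`, and for
`u = √(-s₁) e₁`, `w = √s₃ e₃` one has `w ⊗ w - u ⊗ u = ½ ((u + w) ⊗ (w - u) + (w - u) ⊗ (u + w))`.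
The vectors `a`, `n` are nonzero because `S` is.
-/

open Matrix Polynomial

lemma Fin.exists_perm_comp_eq_of_map_univ_eq {α : Type*} [LinearOrder α] {m : ℕ}
    {f g : Fin m → α} (h : Finset.univ.val.map f = Finset.univ.val.map g) :
    ∃ σ : Equiv.Perm (Fin m), f ∘ σ = g := by
  have hsorted : f ∘ Tuple.sort f = g ∘ Tuple.sort g := by
    have hmap : ∀ φ : Fin m → α, Finset.univ.val.map (φ ∘ Tuple.sort φ) = Finset.univ.val.map φ :=
      fun φ ↦ by rw [← Multiset.map_map, Multiset.map_univ_val_equiv]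
    have hperm := hmap f ▸ hmap g ▸ h
    rw [Fin.univ_val_map, Fin.univ_val_map, Multiset.coe_eq_coe] at hperm
    exact List.ofFn_injective <| hperm.eq_of_sortedLE
      (Tuple.monotone_sort f).sortedLE_ofFn (Tuple.monotone_sort g).sortedLE_ofFn
  refine ⟨Tuple.sort f * (Tuple.sort g)⁻¹, funext fun i ↦ ?_⟩
  simpa using congrFun hsorted ((Tuple.sort g)⁻¹ i)

namespace Matrix.IsHermitian

section

variable {ι : Type*} [Fintype ι] [DecidableEq ι] {S : Matrix ι ι ℝ}

lemma eq_sum_eigenvalues_smul_vecMulVec (hS : S.IsHermitian) :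
    S = ∑ k, hS.eigenvalues k • vecMulVec ⇑(hS.eigenvectorBasis k) ⇑(hS.eigenvectorBasis k) := by
  conv_lhs => rw [hS.spectral_theorem, Unitary.conjStarAlgAut_apply]
  ext i j
  simp [Matrix.mul_apply, Matrix.sum_apply, vecMulVec_apply, diagonal, mul_comm, mul_assoc]

lemma map_eigenvalues_eq_of_charpoly_eq (hS : S.IsHermitian) {s : ι → ℝ}
    (hchar : S.charpoly = ∏ k, (X - C (s k))) :
    Finset.univ.val.map hS.eigenvalues = Finset.univ.val.map s := by
  have := hS.roots_charpoly_eq_eigenvalues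
  rw [hchar, Polynomial.roots_prod _ _ (by simp [Finset.prod_ne_zero_iff, X_sub_C_ne_zero])] at this
  simpa using this.symm

end

lemma exists_eq_sum_smul_vecMulVec_of_charpoly_eq {m : ℕ} {S : Matrix (Fin m) (Fin m) ℝ}
    (hS : S.IsHermitian) {s : Fin m → ℝ} (hchar : S.charpoly = ∏ k, (X - C (s k))) :
    ∃ v : Fin m → Fin m → ℝ, S = ∑ k, s k • vecMulVec (v k) (v k) := by
  obtain ⟨σ, hσ⟩ :=
    Fin.exists_perm_comp_eq_of_map_univ_eq (hS.map_eigenvalues_eq_of_charpoly_eq hchar)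
  refine ⟨fun k ↦ ⇑(hS.eigenvectorBasis (σ k)), ?_⟩
  conv_lhs => rw [hS.eq_sum_eigenvalues_smul_vecMulVec, ← Equiv.sum_comp σ]
  simp [← hσ]

end Matrix.IsHermitian

lemma det_scalar_sub_symm_vecMulVec (a n : Fin 3 → ℝ) (t : ℝ) :
    (scalar (Fin 3) t - (1/2 : ℝ) • (vecMulVec a n + vecMulVec n a)).det
      = t ^ 3 - (a ⬝ᵥ n) * t ^ 2 + ((a ⬝ᵥ n) ^ 2 - (a ⬝ᵥ a) * (n ⬝ᵥ n)) / 4 * t := by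
  simp [det_fin_three, vecMulVec_apply, dotProduct, Fin.sum_univ_three]
  ring

lemma eq_zero_of_mul_mul_eq_zero_of_add_nonpos {s1 s2 s3 : ℝ} (h12 : s1 ≤ s2) (h23 : s2 ≤ s3)
    (hprod : s1 * s2 * s3 = 0) (he2 : s1 * s2 + s1 * s3 + s2 * s3 ≤ 0) : s2 = 0 := by
  rcases lt_trichotomy s2 0 with hneg | hzero | hpos
  · have hs12 : 0 < s1 * s2 := mul_pos_of_neg_of_neg (by linarith) hneg
    have hs3 : s3 = 0 := (mul_eq_zero.1 hprod).resolve_left hs12.ne'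
    subst hs3
    linarith
  · exact hzero
  · have hs23 : 0 < s2 * s3 := mul_pos hpos (by linarith)
    have hs1 : s1 = 0 := by
      rw [mul_assoc] at hprod
      exact (mul_eq_zero.1 hprod).resolve_right hs23.ne'
    subst hs1
    linarith

lemma sq_dotProduct_le_dotProduct_self_mul {ι : Type*} [Fintype ι] (a n : ι → ℝ) :
    (a ⬝ᵥ n) ^ 2 ≤ (a ⬝ᵥ a) * (n ⬝ᵥ n) := by
  simpa only [dotProduct, ← sq] using Finset.sum_mul_sq_le_sq_mul_sq Finset.univ a n

lemma eq_zero_of_charpoly_eq_of_eq_symm_vecMulVec {S : Matrix (Fin 3) (Fin 3) ℝ} {a n : Fin 3 → ℝ}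
    (hS : S = (1/2 : ℝ) • (vecMulVec a n + vecMulVec n a)) {s1 s2 s3 : ℝ} (h12 : s1 ≤ s2)
    (h23 : s2 ≤ s3) (hchar : S.charpoly = (X - C s1) * (X - C s2) * (X - C s3)) : s2 = 0 := by
  have heval (t : ℝ) : (t - s1) * (t - s2) * (t - s3)
      = t ^ 3 - (a ⬝ᵥ n) * t ^ 2 + ((a ⬝ᵥ n) ^ 2 - (a ⬝ᵥ a) * (n ⬝ᵥ n)) / 4 * t := by
    rw [← det_scalar_sub_symm_vecMulVec, ← hS, ← eval_charpoly, hchar]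
    simp
  have hCS := sq_dotProduct_le_dotProduct_self_mul a n
  -- evaluating at `t = 0` and `t = ±1` reads off `s₁s₂s₃` and `s₁s₂ + s₁s₃ + s₂s₃`
  refine eq_zero_of_mul_mul_eq_zero_of_add_nonpos h12 h23 ?_ ?_
  · linear_combination -heval 0
  · linear_combination (heval 1 - heval (-1)) / 2 + hCS / 4

lemma smul_vecMulVec_add_smul_vecMulVec_eq_symm {ι : Type*} (e1 e3 : ι → ℝ) {s1 s3 : ℝ}
    (hs1 : s1 ≤ 0) (hs3 : 0 ≤ s3) :
    s1 • vecMulVec e1 e1 + s3 • vecMulVec e3 e3 = (1/2 : ℝ) •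
      (vecMulVec (√(-s1) • e1 + √s3 • e3) (-√(-s1) • e1 + √s3 • e3)
        + vecMulVec (-√(-s1) • e1 + √s3 • e3) (√(-s1) • e1 + √s3 • e3)) := by
  have h1 : √(-s1) * √(-s1) = -s1 := Real.mul_self_sqrt (by linarith)
  have h3 : √s3 * √s3 = s3 := Real.mul_self_sqrt hs3
  ext i j
  simp only [Matrix.add_apply, Matrix.smul_apply, vecMulVec_apply, Pi.add_apply, Pi.smul_apply,
    smul_eq_mul, neg_mul]
  linear_combination (e1 i * e1 j) * h1 - (e3 i * e3 j) * h3

theorem stmt_11 (S : Matrix (Fin 3) (Fin 3) ℝ) (hSsymm : S.IsSymm) (hS0 : S ≠ 0)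
    (s1 s2 s3 : ℝ) (h12 : s1 ≤ s2) (h23 : s2 ≤ s3)
    (hchar : S.charpoly = (X - C s1) * (X - C s2) * (X - C s3)) :
    ((∃ a n : Fin 3 → ℝ, a ≠ 0 ∧ n ≠ 0 ∧
        S = (1/2 : ℝ) • (Matrix.vecMulVec a n + Matrix.vecMulVec n a)) ↔ s2 = 0) ∧
    (∀ e1 e3 : Fin 3 → ℝ, e1 ⬝ᵥ e1 = 1 → e3 ⬝ᵥ e3 = 1 → e1 ⬝ᵥ e3 = 0 →
      s1 ≤ 0 → 0 ≤ s3 →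
      S = s1 • Matrix.vecMulVec e1 e1 + s3 • Matrix.vecMulVec e3 e3 →
      S = (1/2 : ℝ) •
        (Matrix.vecMulVec (Real.sqrt (-s1) • e1 + Real.sqrt s3 • e3)
            (-(Real.sqrt (-s1)) • e1 + Real.sqrt s3 • e3)
         + Matrix.vecMulVec (-(Real.sqrt (-s1)) • e1 + Real.sqrt s3 • e3)
            (Real.sqrt (-s1) • e1 + Real.sqrt s3 • e3))) := by
  refine ⟨⟨fun ⟨a, n, _, _, hS⟩ ↦ eq_zero_of_charpoly_eq_of_eq_symm_vecMulVec hS h12 h23 hchar,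
    fun hs2 ↦ ?_⟩, fun e1 e3 _ _ _ hs1 hs3 hS ↦
      hS.trans (smul_vecMulVec_add_smul_vecMulVec_eq_symm e1 e3 hs1 hs3)⟩
  obtain ⟨v, hv⟩ := (isHermitian_iff_isSymm.2 hSsymm).exists_eq_sum_smul_vecMulVec_of_charpoly_eq
    (s := ![s1, s2, s3]) (by simp [Fin.prod_univ_three, hchar])
  have hS : S = s1 • vecMulVec (v 0) (v 0) + s3 • vecMulVec (v 2) (v 2) := by
    simpa [Fin.sum_univ_three, hs2] using hv
  obtain ⟨a, n, hSan⟩ : ∃ a n : Fin 3 → ℝ, S = (1/2 : ℝ) • (vecMulVec a n + vecMulVec n a) :=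
    ⟨_, _, hS.trans (smul_vecMulVec_add_smul_vecMulVec_eq_symm _ _ (by linarith) (by linarith))⟩
  refine ⟨a, n, ?_, ?_, hSan⟩ <;> rintro rfl <;> exact hS0 (by simp [hSan])
end

section
/- Let E be a symmetric 3×3 real matrix, ê ∈ ℝ³ a unit vector, Q = −I + 2 ê⊗ê, and Ê = Q E Q. Define a = 4 ((ê · E ê) ê − E ê) and n = ê. Then Ê − E = (1/2)(a ⊗ n + n ⊗ a). Consequently, the skew-symmetric matrix Ŵ = (1/2)(a ⊗ n − n ⊗ a) satisfies Ê + Ŵ − E = a ⊗ n. -/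
/-!
With `P = e ⊗ e`, expanding gives `Q E Q = E - 2 (P E + E P) + 4 P E P`. Symmetry of `E` turns
`P E` into `e ⊗ E e`, while `E P = E e ⊗ e` and `P E P = (e · E e) P`. Hence `Ê - E` is the
symmetrised product of `e` with `2 ((e · E e) e - E e) = a / 2`. The second identity is
linear algebra: adding the skew part `(a ⊗ n - n ⊗ a) / 2` to the symmetric part leaves `a ⊗ n`.
-/

open Matrix

namespace Matrix

variable {R n : Type*} [CommRing R] [Fintype n]

theorem vecMulVec_mul_of_isSymm {E : Matrix n n R} (hE : E.IsSymm) (u v : n → R) :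
    vecMulVec u v * E = vecMulVec u (E *ᵥ v) := by
  rw [vecMulVec_mul, ← mulVec_transpose, hE.eq]

/-- For a unit vector `e` this is the rotation by `π` about `e`. -/
def halfTurn [DecidableEq n] (e : n → R) : Matrix n n R := -1 + (2 : R) • vecMulVec e e

theorem halfTurn_mul_mul_halfTurn_sub [DecidableEq n] {E : Matrix n n R} (hE : E.IsSymm)
    (e : n → R) :
    halfTurn e * E * halfTurn e - E =
      vecMulVec ((2 : R) • ((e ⬝ᵥ E *ᵥ e) • e - E *ᵥ e)) e +
        vecMulVec e ((2 : R) • ((e ⬝ᵥ E *ᵥ e) • e - E *ᵥ e)) := by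
  simp only [halfTurn, add_mul, mul_add, neg_mul, mul_neg, one_mul, mul_one,
    smul_mul_assoc, mul_smul_comm, vecMulVec_mul_of_isSymm hE, mul_vecMulVec,
    vecMulVec_mulVec, op_smul_eq_smul, vecMulVec_smul, smul_vecMulVec, vecMulVec_sub,
    sub_vecMulVec]
  rw [dotProduct_comm (E *ᵥ e) e]
  module

end Matrix

theorem add_half_smul_sub_sub_eq {K M : Type*} [DivisionRing K] [NeZero (2 : K)]
    [AddCommGroup M] [Module K M] {X E A B : M} (h : X - E = (1 / 2 : K) • (A + B)) :
    X + (1 / 2 : K) • (A - B) - E = A := by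
  rw [add_sub_right_comm, h, ← smul_add, add_add_sub_cancel, ← two_smul K A, smul_smul,
    one_div_mul_cancel two_ne_zero, one_smul]

theorem stmt_12_general (E : Matrix (Fin 3) (Fin 3) ℝ) (hE : E.IsSymm)
    (ehat : Fin 3 → ℝ)
    (Q Ehat : Matrix (Fin 3) (Fin 3) ℝ)
    (hQ : Q = -1 + (2 : ℝ) • Matrix.vecMulVec ehat ehat)
    (hEhat : Ehat = Q * E * Q)
    (a n : Fin 3 → ℝ)
    (ha : a = (4 : ℝ) • ((ehat ⬝ᵥ E.mulVec ehat) • ehat - E.mulVec ehat))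
    (hn : n = ehat) :
    Ehat - E = (1/2 : ℝ) • (Matrix.vecMulVec a n + Matrix.vecMulVec n a) ∧
    Ehat + (1/2 : ℝ) • (Matrix.vecMulVec a n - Matrix.vecMulVec n a) - E
      = Matrix.vecMulVec a n := by
  have hdiff : Ehat - E = (1/2 : ℝ) • (vecMulVec a n + vecMulVec n a) := by
    rw [hEhat, show Q = halfTurn ehat from hQ, halfTurn_mul_mul_halfTurn_sub hE, ha, hn]
    simp only [smul_vecMulVec, vecMulVec_smul]
    module
  exact ⟨hdiff, add_half_smul_sub_sub_eq hdiff⟩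

theorem stmt_12 (E : Matrix (Fin 3) (Fin 3) ℝ) (hE : E.IsSymm)
    (ehat : Fin 3 → ℝ) (he : ehat ⬝ᵥ ehat = 1)
    (Q Ehat : Matrix (Fin 3) (Fin 3) ℝ)
    (hQ : Q = -1 + (2 : ℝ) • Matrix.vecMulVec ehat ehat)
    (hEhat : Ehat = Q * E * Q)
    (a n : Fin 3 → ℝ)
    (ha : a = (4 : ℝ) • ((ehat ⬝ᵥ E.mulVec ehat) • ehat - E.mulVec ehat))
    (hn : n = ehat) :
    Ehat - E = (1/2 : ℝ) • (Matrix.vecMulVec a n + Matrix.vecMulVec n a) ∧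
    Ehat + (1/2 : ℝ) • (Matrix.vecMulVec a n - Matrix.vecMulVec n a) - E
      = Matrix.vecMulVec a n :=
  stmt_12_general E hE ehat Q Ehat hQ hEhat a n ha hn
end

section
/- Let A and B be 3×3 real positive-definite symmetric matrices such that B = R A Rᵀ for some 3×3 real orthogonal matrix R. Suppose A⁻¹ B² A⁻¹ = μ₁ e₁⊗e₁ + e₂⊗e₂ + μ₃ e₃⊗e₃, where e₁, e₂, e₃ ∈ ℝ³ are orthonormal and 0 < μ₁ < 1 < μ₃. Then the following three identities hold: μ₁ μ₃ = 1; e₁ · A² e₁ = μ₃ (e₃ · A² e₃); and (e₂ · A² e₁)² = μ₃ (e₂ · A² e₃)². -/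
open Matrix

/-!
Put `P = A²` and `C = A⁻¹ B² A⁻¹`. Then `C P = A⁻¹ B² A` is similar to `B² = R P Rᵀ`, hence to `P`.
In the frame `e₁, e₂, e₃`, `C` becomes `D = diag(μ₁, 1, μ₃)` and `P` becomes the symmetric matrix
`Q = (eᵢ · P eⱼ)ᵢⱼ`, so `D Q` is similar to `Q`. Comparing determinants gives `μ₁ μ₃ = 1`, and
comparing `tr (D Q) = tr Q` and `tr (D Q)² = tr Q²` gives the two relations between entries of `Q`.
-/

namespace Matrix

variable {n α : Type*} [Fintype n] [CommRing α]

lemma IsSymm.mul_mul_transpose {P : Matrix n n α} (hP : P.IsSymm) (E : Matrix n n α) :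
    (E * P * Eᵀ).IsSymm := by
  simp only [IsSymm, transpose_mul, transpose_transpose, hP.eq, Matrix.mul_assoc]

variable [DecidableEq n]

/-- Over a commutative ring, `Y * X = 1` forces `X * Y = 1`, so this is ordinary similarity. -/
def IsSimilar (M N : Matrix n n α) : Prop :=
  ∃ X Y : Matrix n n α, Y * X = 1 ∧ M = X * N * Y

namespace IsSimilar

variable {M N K : Matrix n n α}

lemma of_mul_eq_one {X Y : Matrix n n α} (h : Y * X = 1) (N : Matrix n n α) :
    IsSimilar (X * N * Y) N :=
  ⟨X, Y, h, rfl⟩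

lemma symm (h : IsSimilar M N) : IsSimilar N M := by
  obtain ⟨X, Y, hYX, rfl⟩ := h
  refine ⟨Y, X, mul_eq_one_comm.mp hYX, ?_⟩
  simp only [Matrix.mul_assoc, hYX, Matrix.mul_one]
  rw [← Matrix.mul_assoc, hYX, Matrix.one_mul]

lemma trans (hMN : IsSimilar M N) (hNK : IsSimilar N K) : IsSimilar M K := by
  obtain ⟨X, Y, hYX, rfl⟩ := hMN
  obtain ⟨X', Y', hYX', rfl⟩ := hNK
  refine ⟨X * X', Y' * Y, ?_, by simp only [Matrix.mul_assoc]⟩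
  rw [Matrix.mul_assoc, ← Matrix.mul_assoc Y, hYX, Matrix.one_mul, hYX']

lemma det_eq (h : IsSimilar M N) : M.det = N.det := by
  obtain ⟨X, Y, hYX, rfl⟩ := h
  rw [det_mul_comm, ← Matrix.mul_assoc, hYX, Matrix.one_mul]

lemma trace_eq (h : IsSimilar M N) : M.trace = N.trace := by
  obtain ⟨X, Y, hYX, rfl⟩ := h
  rw [trace_mul_cycle, hYX, Matrix.one_mul]

lemma pow (h : IsSimilar M N) (k : ℕ) : IsSimilar (M ^ k) (N ^ k) := by
  obtain ⟨X, Y, hYX, rfl⟩ := h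
  refine ⟨X, Y, hYX, ?_⟩
  induction k with
  | zero => simpa using (mul_eq_one_comm.mp hYX).symm
  | succ k ih =>
    rw [pow_succ, ih, pow_succ]
    simp only [Matrix.mul_assoc]
    rw [← Matrix.mul_assoc Y, hYX, Matrix.one_mul]

end IsSimilar

lemma det_eq_one_of_isSimilar_mul {D Q : Matrix n n α} (hQ : IsUnit Q.det)
    (h : IsSimilar (D * Q) Q) : D.det = 1 := by
  have hdet := h.det_eq
  rw [det_mul] at hdet
  exact hQ.mul_right_cancel (hdet.trans (one_mul _).symm)

lemma isSimilar_inv_mul_sq_mul_inv_mul_sq {A B R : Matrix n n α} (hA : IsUnit A.det)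
    (hR : R * Rᵀ = 1) (hBA : B = R * A * Rᵀ) :
    IsSimilar (A⁻¹ * (B * B) * A⁻¹ * (A * A)) (A * A) := by
  have hRtR : Rᵀ * R = 1 := mul_eq_one_comm.mp hR
  have hCP : A⁻¹ * (B * B) * A⁻¹ * (A * A) = A⁻¹ * (B * B) * A := by
    rw [← Matrix.mul_assoc, nonsing_inv_mul_cancel_right _ _ hA]
  have hBB : B * B = R * (A * A) * Rᵀ := by
    simp only [hBA, Matrix.mul_assoc]
    rw [← Matrix.mul_assoc Rᵀ R, hRtR, Matrix.one_mul]
  rw [hCP, hBB]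
  exact (IsSimilar.of_mul_eq_one (mul_nonsing_inv A hA) _).trans
    (IsSimilar.of_mul_eq_one hRtR _)

lemma isSimilar_mul_mul_transpose {E C D P : Matrix n n α} (hE : E * Eᵀ = 1)
    (hC : C = Eᵀ * D * E) : IsSimilar (D * (E * P * Eᵀ)) (C * P) := by
  have hDQ : D * (E * P * Eᵀ) = E * (C * P) * Eᵀ := by
    simp only [hC, Matrix.mul_assoc]
    rw [← Matrix.mul_assoc E Eᵀ, hE, Matrix.one_mul]
  rw [hDQ]
  exact IsSimilar.of_mul_eq_one (mul_eq_one_comm.mp hE) _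

lemma transpose_mul_diagonal_mul (E : Matrix n n α) (d : n → α) :
    Eᵀ * diagonal d * E = ∑ i, d i • vecMulVec (E i) (E i) := by
  ext j k
  simp only [mul_apply, diagonal_apply, transpose_apply, mul_ite, mul_zero, Finset.sum_ite_eq',
    Finset.mem_univ, if_true, Matrix.sum_apply, smul_apply, vecMulVec_apply, smul_eq_mul]
  exact Finset.sum_congr rfl fun i _ => by ring

lemma mul_transpose_eq_one_of_orthonormal {E : Matrix (Fin 3) (Fin 3) α}
    (h0 : E 0 ⬝ᵥ E 0 = 1) (h1 : E 1 ⬝ᵥ E 1 = 1) (h2 : E 2 ⬝ᵥ E 2 = 1)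
    (h01 : E 0 ⬝ᵥ E 1 = 0) (h02 : E 0 ⬝ᵥ E 2 = 0) (h12 : E 1 ⬝ᵥ E 2 = 0) :
    E * Eᵀ = 1 := by
  ext i j
  change E i ⬝ᵥ E j = _
  fin_cases i <;> fin_cases j <;>
    simp [dotProduct_comm (E 1) (E 0), dotProduct_comm (E 2) (E 0), dotProduct_comm (E 2) (E 1), *]

end Matrix

lemma entries_of_isSimilar_diagonal_mul {μ1 μ3 : ℝ} {Q : Matrix (Fin 3) (Fin 3) ℝ}
    (hQ : Q.IsSymm) (hμ3 : 1 < μ3) (hμ : μ1 * μ3 = 1)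
    (h : IsSimilar (diagonal ![μ1, 1, μ3] * Q) Q) :
    Q 0 0 = μ3 * Q 2 2 ∧ Q 1 0 ^ 2 = μ3 * Q 1 2 ^ 2 := by
  have h1 := h.trace_eq
  have h2 := (h.pow 2).trace_eq
  simp only [sq, trace, diag, mul_apply, Fin.sum_univ_three, diagonal_apply, Fin.isValue,
    Fin.reduceEq, if_true, if_false, cons_val_zero, cons_val_one,
    cons_val_two, Nat.succ_eq_add_one, Nat.reduceAdd, tail_cons, head_cons, one_mul] at h1 h2
  rw [hQ.apply 1 0, hQ.apply 2 0, hQ.apply 2 1] at h2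
  rw [hQ.apply 2 1]
  have h00 : Q 0 0 = μ3 * Q 2 2 := by
    refine mul_left_cancel₀ (by linarith : μ3 - 1 ≠ 0) ?_
    linear_combination Q 0 0 * hμ - μ3 * h1
  -- In `h2 : ∑ (dᵢ dⱼ - 1) Qᵢⱼ² = 0` the `Q 2 0` term vanishes as `μ₁ μ₃ = 1`, and the
  -- diagonal terms cancel by `h00`, leaving the `Q 1 0` and `Q 2 1` terms.
  refine ⟨h00, mul_left_cancel₀ (by positivity : 2 * μ3 * (μ3 - 1) ≠ 0) ?_⟩
  linear_combination -μ3 ^ 2 * h2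
    + ((μ1 * μ3 + 1) * Q 0 0 ^ 2 + 2 * μ3 * Q 1 0 ^ 2 + 2 * μ3 ^ 2 * Q 2 0 ^ 2) * hμ
    + ((1 - μ3 ^ 2) * (Q 0 0 + μ3 * Q 2 2)) * h00

theorem stmt_15_general (A B : Matrix (Fin 3) (Fin 3) ℝ) (hA : A.PosDef)
    (R : Matrix (Fin 3) (Fin 3) ℝ) (hR : R * Rᵀ = 1) (hBA : B = R * A * Rᵀ)
    (μ1 μ3 : ℝ) (e1 e2 e3 : Fin 3 → ℝ)
    (he1 : e1 ⬝ᵥ e1 = 1) (he2 : e2 ⬝ᵥ e2 = 1) (he3 : e3 ⬝ᵥ e3 = 1)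
    (h12 : e1 ⬝ᵥ e2 = 0) (h13 : e1 ⬝ᵥ e3 = 0) (h23 : e2 ⬝ᵥ e3 = 0)
    (hμ3 : 1 < μ3)
    (hdecomp : A⁻¹ * (B * B) * A⁻¹
      = μ1 • Matrix.vecMulVec e1 e1 + Matrix.vecMulVec e2 e2
        + μ3 • Matrix.vecMulVec e3 e3) :
    μ1 * μ3 = 1 ∧
    e1 ⬝ᵥ (A * A).mulVec e1 = μ3 * (e3 ⬝ᵥ (A * A).mulVec e3) ∧
    (e2 ⬝ᵥ (A * A).mulVec e1) ^ 2 = μ3 * (e2 ⬝ᵥ (A * A).mulVec e3) ^ 2 := by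
  set E : Matrix (Fin 3) (Fin 3) ℝ := ![e1, e2, e3]
  have hE : E * Eᵀ = 1 := mul_transpose_eq_one_of_orthonormal he1 he2 he3 h12 h13 h23
  have hC : A⁻¹ * (B * B) * A⁻¹ = Eᵀ * diagonal ![μ1, 1, μ3] * E := by
    rw [hdecomp, transpose_mul_diagonal_mul, Fin.sum_univ_three]
    simp [E]
  have hAdet : IsUnit A.det := hA.det_pos.ne'.isUnit
  have hQP : IsSimilar (E * (A * A) * Eᵀ) (A * A) :=
    IsSimilar.of_mul_eq_one (mul_eq_one_comm.mp hE) _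
  have hsim : IsSimilar (diagonal ![μ1, 1, μ3] * (E * (A * A) * Eᵀ)) (E * (A * A) * Eᵀ) :=
    ((isSimilar_mul_mul_transpose hE hC).trans
      (isSimilar_inv_mul_sq_mul_inv_mul_sq hAdet hR hBA)).trans hQP.symm
  have hμ : μ1 * μ3 = 1 := by
    have hQdet : IsUnit (E * (A * A) * Eᵀ).det := by
      rw [hQP.det_eq, det_mul]
      exact hAdet.mul hAdet
    simpa [det_diagonal, Fin.prod_univ_three] using det_eq_one_of_isSimilar_mul hQdet hsim
  have hQsymm : (E * (A * A) * Eᵀ).IsSymm := by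
    rw [← sq]
    exact ((isHermitian_iff_isSymm.mp hA.isHermitian).pow 2).mul_mul_transpose E
  obtain ⟨h00, h10⟩ := entries_of_isSimilar_diagonal_mul hQsymm hμ3 hμ hsim
  simp only [mul_mul_apply, transpose_transpose] at h00 h10
  exact ⟨hμ, h00, h10⟩

theorem stmt_15 (A B : Matrix (Fin 3) (Fin 3) ℝ) (hA : A.PosDef) (hB : B.PosDef)
    (R : Matrix (Fin 3) (Fin 3) ℝ) (hR : R * Rᵀ = 1) (hBA : B = R * A * Rᵀ)
    (μ1 μ3 : ℝ) (e1 e2 e3 : Fin 3 → ℝ)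
    (he1 : e1 ⬝ᵥ e1 = 1) (he2 : e2 ⬝ᵥ e2 = 1) (he3 : e3 ⬝ᵥ e3 = 1)
    (h12 : e1 ⬝ᵥ e2 = 0) (h13 : e1 ⬝ᵥ e3 = 0) (h23 : e2 ⬝ᵥ e3 = 0)
    (hμ1 : 0 < μ1) (hμ1' : μ1 < 1) (hμ3 : 1 < μ3)
    (hdecomp : A⁻¹ * (B * B) * A⁻¹
      = μ1 • Matrix.vecMulVec e1 e1 + Matrix.vecMulVec e2 e2
        + μ3 • Matrix.vecMulVec e3 e3) :
    μ1 * μ3 = 1 ∧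
    e1 ⬝ᵥ (A * A).mulVec e1 = μ3 * (e3 ⬝ᵥ (A * A).mulVec e3) ∧
    (e2 ⬝ᵥ (A * A).mulVec e1) ^ 2 = μ3 * (e2 ⬝ᵥ (A * A).mulVec e3) ^ 2 :=
  stmt_15_general A B hA R hR hBA μ1 μ3 e1 e2 e3 he1 he2 he3 h12 h13 h23 hμ3 hdecomp
end
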